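/- arXiv:1811.07257 — 3 statements merged into one kernel-verified Lean document; each statement's English description precedes it below -/
import Mathlib

section
/- Fix 0 ≠ k ∈ ℝ³ and suppose u₊, u₋ ∈ k⊥ satisfy C_k u₊ = |k| u₊ and C_k u₋ = −|k| u₋; let u = u₊ + u₋. Then exp(t(C_k − |k|·id)) u → u₊ and exp(t(−C_k − |k|·id)) u → u₋ as t → ∞, where exp denotes the exponential of endomorphisms of ℂ³. (This is the Fourier-mode form of the statement that the flows of the helicity vector fields h_± converge to the orthogonal projections onto the positive and negative helicity subspaces of electromagnetic configuration space.) -/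
/-!
Both flows are generated by `±C_k - |k|`, which is diagonal on `u₊, u₋`: one of them is in
its kernel and the other has eigenvalue `-2|k| < 0`. On an eigenvector the exponential acts by
the scalar exponential of the eigenvalue, so the flow fixes one component and damps the other
like `exp(-2|k|t)`. The second flow is the first one for `-C_k`, with the roles of `u₊, u₋`
exchanged.
-/

/-- The operator `C_k u = i k × u` on `ℂ³`, where `×` is the complex-bilinear
cross product and `k ∈ ℝ³`. -/
noncomputable def Ck (k : Fin 3 → ℝ) (u : Fin 3 → ℂ) : Fin 3 → ℂ :=
  Complex.I • (crossProduct (fun j => (k j : ℂ)) u)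

/-- The Euclidean length `|k|` of `k ∈ ℝ³`. -/
noncomputable def nk (k : Fin 3 → ℝ) : ℝ := Real.sqrt (∑ j, k j ^ 2)

/-- `C_k` as a continuous linear endomorphism of `ℂ³`. -/
noncomputable def CkL (k : Fin 3 → ℝ) : (Fin 3 → ℂ) →L[ℂ] (Fin 3 → ℂ) :=
  LinearMap.toContinuousLinearMap
    (Complex.I • crossProduct (fun j => (k j : ℂ)))

open Filter Topology NormedSpace

section Eigenvector

variable {𝕂 E : Type*} [RCLike 𝕂] [NormedAddCommGroup E] [NormedSpace 𝕂 E] [CompleteSpace E]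

theorem ContinuousLinearMap.exp_apply_of_apply_eq_smul {A : E →L[𝕂] E} {μ : 𝕂} {v : E}
    (h : A v = μ • v) : exp A v = exp μ • v := by
  have hpow (n : ℕ) : (A ^ n) v = μ ^ n • v := by
    induction n with
    | zero => simp
    | succ n ih => rw [pow_succ', mul_apply_eq_comp, ih, map_smul, h, smul_smul, pow_succ]
  calc exp A v
      = ∑' n : ℕ, ((n.factorial : 𝕂)⁻¹ • A ^ n) v := by
        rw [exp_eq_tsum 𝕂]
        exact (ContinuousLinearMap.apply 𝕂 E v).map_tsum (expSeries_summable' A)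
    _ = ∑' n : ℕ, ((n.factorial : 𝕂)⁻¹ • μ ^ n) • v := by
        simp_rw [smul_apply, hpow, smul_smul, smul_eq_mul]
    _ = exp μ • v := by
        rw [(expSeries_summable' μ).tsum_smul_const, exp_eq_tsum 𝕂]

end Eigenvector

section Flow

variable {E : Type*} [NormedAddCommGroup E] [NormedSpace ℂ E] [CompleteSpace E]

theorem ContinuousLinearMap.exp_real_smul_apply_of_apply_eq_smul {A : E →L[ℂ] E} {μ : ℂ}
    {v : E} (h : A v = μ • v) (t : ℝ) : exp (t • A) v = Complex.exp (t * μ) • v := by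
  rw [ContinuousLinearMap.exp_apply_of_apply_eq_smul (μ := t * μ), Complex.exp_eq_exp_ℂ]
  rw [smul_apply, h, ← Complex.coe_smul, smul_smul]

theorem Complex.tendsto_exp_real_mul_atTop_of_re_neg {z : ℂ} (hz : z.re < 0) :
    Tendsto (fun t : ℝ => Complex.exp (t * z)) atTop (𝓝 0) := by
  refine tendsto_exp_comap_re_atBot.comp (tendsto_comap_iff.mpr ?_)
  simpa [Function.comp_def] using tendsto_id.atTop_mul_const_of_neg hz

theorem tendsto_exp_real_smul_sub_apply_add {A : E →L[ℂ] E} {c : ℝ} (hc : 0 < c) {up um : E}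
    (hup : A up = (c : ℂ) • up) (hum : A um = (-(c : ℂ)) • um) :
    Tendsto (fun t : ℝ => exp (t • (A - (c : ℂ) • ContinuousLinearMap.id ℂ E)) (up + um))
      atTop (𝓝 up) := by
  set B := A - (c : ℂ) • ContinuousLinearMap.id ℂ E
  have hBup : B up = (0 : ℂ) • up := by simp [B, hup]
  have hBum : B um = (-2 * c : ℂ) • um := by
    simp only [B, sub_apply, smul_apply, ContinuousLinearMap.id_apply, hum, ← sub_smul]
    ring_nf
  have hflow (t : ℝ) : exp (t • B) (up + um) = up + Complex.exp (t * (-2 * c)) • um := by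
    rw [map_add, ContinuousLinearMap.exp_real_smul_apply_of_apply_eq_smul hBup,
      ContinuousLinearMap.exp_real_smul_apply_of_apply_eq_smul hBum, mul_zero, Complex.exp_zero,
      one_smul]
  have hdecay := Complex.tendsto_exp_real_mul_atTop_of_re_neg (z := -2 * c) (by simpa using hc)
  simpa [hflow] using tendsto_const_nhds.add (hdecay.smul_const um)

end Flow

theorem CkL_apply (k : Fin 3 → ℝ) (u : Fin 3 → ℂ) : CkL k u = Ck k u := rfl

theorem nk_pos {k : Fin 3 → ℝ} (hk : k ≠ 0) : 0 < nk k := by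
  obtain ⟨j, hj⟩ := Function.ne_iff.mp hk
  exact Real.sqrt_pos.mpr <| Finset.sum_pos' (fun i _ => sq_nonneg (k i))
    ⟨j, Finset.mem_univ j, sq_pos_of_ne_zero hj⟩

theorem helicityFlows_tendsto_projections_general (k : Fin 3 → ℝ) (hk : k ≠ 0)
    (up um : Fin 3 → ℂ)
    (hup : Ck k up = (nk k : ℂ) • up)
    (hum : Ck k um = (-(nk k : ℂ)) • um) :
    Filter.Tendsto
      (fun t : ℝ =>
        NormedSpace.exp
          (t • (CkL k - (nk k : ℂ) • ContinuousLinearMap.id ℂ (Fin 3 → ℂ)))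
          (up + um))
      Filter.atTop (nhds up) ∧
    Filter.Tendsto
      (fun t : ℝ =>
        NormedSpace.exp
          (t • (-(CkL k) - (nk k : ℂ) • ContinuousLinearMap.id ℂ (Fin 3 → ℂ)))
          (up + um))
      Filter.atTop (nhds um) := by
  rw [← CkL_apply] at hup hum
  refine ⟨tendsto_exp_real_smul_sub_apply_add (nk_pos hk) hup hum, ?_⟩
  rw [add_comm up um]
  refine tendsto_exp_real_smul_sub_apply_add (nk_pos hk) ?_ ?_
  · rw [neg_apply, hum, neg_smul, neg_neg]
  · rw [neg_apply, hup, neg_smul]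

/-- Fix `0 ≠ k ∈ ℝ³`, `u₊, u₋ ∈ k⊥` with `C_k u₊ = |k| u₊` and
`C_k u₋ = −|k| u₋`, and set `u = u₊ + u₋`.  Then
`exp(t(C_k − |k|·id)) u → u₊` and `exp(t(−C_k − |k|·id)) u → u₋` as `t → ∞`,
where `exp` is the exponential of (continuous linear) endomorphisms of `ℂ³`. -/
theorem helicityFlows_tendsto_projections (k : Fin 3 → ℝ) (hk : k ≠ 0)
    (up um : Fin 3 → ℂ)
    (hup_perp : ∑ j, up j * (k j : ℂ) = 0)
    (hum_perp : ∑ j, um j * (k j : ℂ) = 0)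
    (hup : Ck k up = (nk k : ℂ) • up)
    (hum : Ck k um = (-(nk k : ℂ)) • um) :
    Filter.Tendsto
      (fun t : ℝ =>
        NormedSpace.exp
          (t • (CkL k - (nk k : ℂ) • ContinuousLinearMap.id ℂ (Fin 3 → ℂ)))
          (up + um))
      Filter.atTop (nhds up) ∧
    Filter.Tendsto
      (fun t : ℝ =>
        NormedSpace.exp
          (t • (-(CkL k) - (nk k : ℂ) • ContinuousLinearMap.id ℂ (Fin 3 → ℂ)))
          (up + um))
      Filter.atTop (nhds um) :=
  helicityFlows_tendsto_projections_general k hk up um hup hum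
end

section
/- Let 𝔞 : ℝ³ × [0,∞) → M_n(ℂ)³ be a smooth time-dependent gauge potential satisfying the Yang–Mills–Poisson equation, and let g : ℝ³ → GL_n(ℂ) be smooth (independent of s). Then the gauge transform 𝔞^g, defined by (𝔞^g)_j(x,s) = g(x)⁻¹ 𝔞_j(x,s) g(x) + g(x)⁻¹ ∂_j g(x), also satisfies the Yang–Mills–Poisson equation. -/
/-- Entrywise partial derivative `∂_j f` of a matrix-valued function on `ℝ³`. -/
noncomputable def pdM {n : ℕ}
    (j : Fin 3) (f : (Fin 3 → ℝ) → Matrix (Fin n) (Fin n) ℂ) (x : Fin 3 → ℝ) :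
    Matrix (Fin n) (Fin n) ℂ :=
  Matrix.of fun i l => fderiv ℝ (fun y => f y i l) x (Pi.single j 1)

/-- Entrywise derivative in `s` of a matrix-valued function of a real variable. -/
noncomputable def dsM {n : ℕ} (f : ℝ → Matrix (Fin n) (Fin n) ℂ) (s : ℝ) :
    Matrix (Fin n) (Fin n) ℂ :=
  Matrix.of fun i l => deriv (fun τ => f τ i l) s

/-- Spatial curvature `𝔟_{jk}(x,s) = ∂_j 𝔞_k − ∂_k 𝔞_j + [𝔞_j, 𝔞_k]` of a
time-dependent matrix-valued gauge potential, `[X,Y] = XY − YX`. -/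
noncomputable def curvMt {n : ℕ}
    (𝔞 : Fin 3 → (Fin 3 → ℝ) → ℝ → Matrix (Fin n) (Fin n) ℂ) (j k : Fin 3)
    (x : Fin 3 → ℝ) (s : ℝ) : Matrix (Fin n) (Fin n) ℂ :=
  pdM j (fun y => 𝔞 k y s) x - pdM k (fun y => 𝔞 j y s) x
    + (𝔞 j x s * 𝔞 k x s - 𝔞 k x s * 𝔞 j x s)

/-- The Yang–Mills–Poisson equation in temporal gauge:
`∂_s² 𝔞_j = −∑_k ∂_k^𝔞 𝔟_{kj}` where `∂_k^𝔞 ξ = ∂_k ξ + [𝔞_k, ξ]`. -/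
def YangMillsPoissonM {n : ℕ}
    (𝔞 : Fin 3 → (Fin 3 → ℝ) → ℝ → Matrix (Fin n) (Fin n) ℂ) : Prop :=
  ∀ j x (s : ℝ), 0 ≤ s →
    dsM (fun τ => dsM (fun σ => 𝔞 j x σ) τ) s =
      -∑ k, (pdM k (fun y => curvMt 𝔞 k j y s) x
        + (𝔞 k x s * curvMt 𝔞 k j x s - curvMt 𝔞 k j x s * 𝔞 k x s))


/-!
With `Ω_j = ∂_j g · g⁻¹` one has `𝔞^g_j = g⁻¹ (𝔞_j + Ω_j) g` and
`∂_k (g⁻¹ ξ g) = g⁻¹ (∂_k ξ + [ξ, Ω_k]) g`. The form `Ω` is flat,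
`∂_j Ω_k − ∂_k Ω_j = [Ω_j, Ω_k]`, by the symmetry of second derivatives of `g`.
Together these give `𝔟^g = g⁻¹ 𝔟 g` and `∂^{𝔞^g}_k (g⁻¹ ξ g) = g⁻¹ (∂^𝔞_k ξ) g`, so the
right-hand side of the equation is conjugated by `g`; since `g` does not depend on `s`,
so is `∂_s² 𝔞^g`.
-/

open Matrix

section EntrywiseSmoothness

variable {E : Type*} [NormedAddCommGroup E] [NormedSpace ℝ E] {ι : Type*}

def EntrywiseSmooth (f : E → Matrix ι ι ℂ) : Prop :=
  ∀ i l, ContDiff ℝ (⊤ : ℕ∞) fun x => f x i l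

namespace EntrywiseSmooth

variable {f h : E → Matrix ι ι ℂ}

theorem add (hf : EntrywiseSmooth f) (hh : EntrywiseSmooth h) :
    EntrywiseSmooth fun x => f x + h x :=
  fun i l => (hf i l).add (hh i l)

theorem sub (hf : EntrywiseSmooth f) (hh : EntrywiseSmooth h) :
    EntrywiseSmooth fun x => f x - h x :=
  fun i l => (hf i l).sub (hh i l)

theorem mul [Fintype ι] (hf : EntrywiseSmooth f) (hh : EntrywiseSmooth h) :
    EntrywiseSmooth fun x => f x * h x :=
  fun i l => by simpa only [mul_apply] using ContDiff.sum fun m _ => (hf i m).mul (hh m l)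

theorem differentiableAt (hf : EntrywiseSmooth f) (i l : ι) (x : E) :
    DifferentiableAt ℝ (fun y => f y i l) x :=
  ((hf i l).differentiable (by simp)).differentiableAt

theorem contDiff_det [Fintype ι] [DecidableEq ι] (hf : EntrywiseSmooth f) :
    ContDiff ℝ (⊤ : ℕ∞) fun x => (f x).det := by
  simp only [det_apply']
  exact ContDiff.sum fun σ _ => contDiff_const.mul (contDiff_prod fun i _ => hf (σ i) i)

theorem updateRow [DecidableEq ι] (hf : EntrywiseSmooth f) (l : ι) (v : ι → ℂ) :
    EntrywiseSmooth fun x => (f x).updateRow l v := fun a b => by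
  by_cases hal : a = l
  · subst hal; simpa using contDiff_const
  · simpa [updateRow_apply, hal] using hf a b

/-- Cramer's rule writes each entry of `(f x)⁻¹` as a quotient of determinants. -/
theorem inv [Fintype ι] [DecidableEq ι] (hf : EntrywiseSmooth f) (hunit : ∀ x, IsUnit (f x)) :
    EntrywiseSmooth fun x => (f x)⁻¹ := fun i l => by
  have hdet : ∀ x, (f x).det ≠ 0 := fun x => ((isUnit_iff_isUnit_det _).mp (hunit x)).ne_zero
  simp only [inv_def, Matrix.smul_apply, Ring.inverse_eq_inv', adjugate_apply, smul_eq_mul]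
  exact (hf.contDiff_det.inv hdet).mul (hf.updateRow l (Pi.single i 1)).contDiff_det

end EntrywiseSmooth

end EntrywiseSmoothness

section SpatialDerivative

variable {n : ℕ} {f h g ξ : (Fin 3 → ℝ) → Matrix (Fin n) (Fin n) ℂ} {j k : Fin 3}
  {x : Fin 3 → ℝ}

theorem EntrywiseSmooth.pdM (hf : EntrywiseSmooth f) (j : Fin 3) :
    EntrywiseSmooth fun x => pdM j f x := fun i l =>
  ((hf i l).fderiv_right (m := (⊤ : ℕ∞)) (by exact_mod_cast le_top)).clm_apply contDiff_const

theorem pdM_const (C : Matrix (Fin n) (Fin n) ℂ) : pdM j (fun _ => C) x = 0 := by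
  ext i l
  simp [pdM]

theorem pdM_add (hf : EntrywiseSmooth f) (hh : EntrywiseSmooth h) :
    pdM j (fun x => f x + h x) x = pdM j f x + pdM j h x := by
  ext i l
  simp only [pdM, of_apply, Matrix.add_apply]
  rw [fderiv_fun_add (hf.differentiableAt i l x) (hh.differentiableAt i l x)]
  rfl

theorem pdM_mul (hf : EntrywiseSmooth f) (hh : EntrywiseSmooth h) :
    pdM j (fun x => f x * h x) x = pdM j f x * h x + f x * pdM j h x := by
  ext i l
  simp only [pdM, of_apply, Matrix.add_apply, mul_apply]
  rw [fderiv_fun_sum fun m _ => (hf.differentiableAt i m x).fun_mul (hh.differentiableAt m l x)]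
  simp only [FunLike.coe_sum, Finset.sum_apply, ← Finset.sum_add_distrib]
  refine Finset.sum_congr rfl fun m _ => ?_
  rw [fderiv_fun_mul (hf.differentiableAt i m x) (hh.differentiableAt m l x)]
  simp only [_root_.add_apply, _root_.smul_apply, smul_eq_mul]
  ring

theorem pdM_pdM_comm (hf : EntrywiseSmooth f) :
    pdM j (fun y => pdM k f y) x = pdM k (fun y => pdM j f y) x := by
  ext i l
  simp only [pdM, of_apply]
  have hC : ContDiff ℝ (⊤ : ℕ∞) (fderiv ℝ fun z => f z i l) :=
    (hf i l).fderiv_right (m := (⊤ : ℕ∞)) (by exact_mod_cast le_top)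
  have hsecond : ∀ v : Fin 3 → ℝ, fderiv ℝ (fun y => fderiv ℝ (fun z => f z i l) y v) x =
      (fderiv ℝ (fderiv ℝ fun z => f z i l) x).flip v := fun v => by
    simpa using fderiv_clm_apply (hC.differentiable (by simp)).differentiableAt
      (differentiableAt_const v)
  rw [hsecond, hsecond, ContinuousLinearMap.flip_apply, ContinuousLinearMap.flip_apply]
  have hsmooth : minSmoothness ℝ 2 ≤ ((⊤ : ℕ∞) : WithTop ℕ∞) := by
    rw [minSmoothness_of_isRCLikeNormedField]; exact WithTop.coe_le_coe.mpr le_top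
  exact ((hf i l).contDiffAt (x := x)).isSymmSndFDerivAt hsmooth (Pi.single j 1) (Pi.single k 1)

theorem pdM_inv (hg : EntrywiseSmooth g) (hgunit : ∀ x, IsUnit (g x)) :
    pdM j (fun x => (g x)⁻¹) x = -((g x)⁻¹ * pdM j g x * (g x)⁻¹) := by
  have hdet : ∀ y, IsUnit (g y).det := fun y => (isUnit_iff_isUnit_det _).mp (hgunit y)
  have hprod := pdM_mul (j := j) (x := x) (hg.inv hgunit) hg
  simp only [nonsing_inv_mul _ (hdet _), pdM_const] at hprod
  calc pdM j (fun x => (g x)⁻¹) x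
      = (pdM j (fun x => (g x)⁻¹) x * g x + (g x)⁻¹ * pdM j g x) * (g x)⁻¹
          - (g x)⁻¹ * pdM j g x * (g x)⁻¹ := by
        rw [add_mul, mul_nonsing_inv_cancel_right _ _ (hdet x)]; abel
    _ = -((g x)⁻¹ * pdM j g x * (g x)⁻¹) := by rw [← hprod]; noncomm_ring

end SpatialDerivative

theorem conj_mul_conj {R : Type*} [Ring R] {u g : R} (h : g * u = 1) (a b : R) :
    u * a * g * (u * b * g) = u * (a * b) * g := by
  simp only [mul_assoc, ← mul_assoc g u, h, one_mul]

section Gauge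

variable {n : ℕ} {g ξ : (Fin 3 → ℝ) → Matrix (Fin n) (Fin n) ℂ} {j k : Fin 3}
  {x : Fin 3 → ℝ}

noncomputable def maurerCartan (g : (Fin 3 → ℝ) → Matrix (Fin n) (Fin n) ℂ) (j : Fin 3)
    (x : Fin 3 → ℝ) : Matrix (Fin n) (Fin n) ℂ :=
  pdM j g x * (g x)⁻¹

theorem EntrywiseSmooth.maurerCartan (hg : EntrywiseSmooth g) (hgunit : ∀ x, IsUnit (g x))
    (j : Fin 3) : EntrywiseSmooth (maurerCartan g j) :=
  (hg.pdM j).mul (hg.inv hgunit)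

theorem pdM_maurerCartan_sub (hg : EntrywiseSmooth g) (hgunit : ∀ x, IsUnit (g x)) :
    pdM j (maurerCartan g k) x - pdM k (maurerCartan g j) x =
      maurerCartan g j x * maurerCartan g k x - maurerCartan g k x * maurerCartan g j x := by
  unfold maurerCartan
  rw [pdM_mul (hg.pdM k) (hg.inv hgunit), pdM_mul (hg.pdM j) (hg.inv hgunit),
    pdM_inv hg hgunit, pdM_inv hg hgunit, pdM_pdM_comm hg]
  noncomm_ring

theorem pdM_conj (hg : EntrywiseSmooth g) (hgunit : ∀ x, IsUnit (g x))
    (hξ : EntrywiseSmooth ξ) :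
    pdM k (fun y => (g y)⁻¹ * ξ y * g y) x =
      (g x)⁻¹ * (pdM k ξ x + (ξ x * maurerCartan g k x - maurerCartan g k x * ξ x)) * g x := by
  have hinv : (g x)⁻¹ * g x = 1 := nonsing_inv_mul _ ((isUnit_iff_isUnit_det _).mp (hgunit x))
  rw [pdM_mul ((hg.inv hgunit).mul hξ) hg, pdM_mul (hg.inv hgunit) hξ, pdM_inv hg hgunit]
  simp only [maurerCartan, mul_add, mul_sub, add_mul, sub_mul, mul_assoc, hinv, mul_one]
  noncomm_ring

noncomputable def covDerivM (A : (Fin 3 → ℝ) → Matrix (Fin n) (Fin n) ℂ) (k : Fin 3)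
    (ξ : (Fin 3 → ℝ) → Matrix (Fin n) (Fin n) ℂ) (x : Fin 3 → ℝ) : Matrix (Fin n) (Fin n) ℂ :=
  pdM k ξ x + (A x * ξ x - ξ x * A x)

theorem covDerivM_conj (hg : EntrywiseSmooth g) (hgunit : ∀ x, IsUnit (g x))
    (hξ : EntrywiseSmooth ξ) (A : (Fin 3 → ℝ) → Matrix (Fin n) (Fin n) ℂ) :
    covDerivM (fun y => (g y)⁻¹ * (A y + maurerCartan g k y) * g y) k
        (fun y => (g y)⁻¹ * ξ y * g y) x = (g x)⁻¹ * covDerivM A k ξ x * g x := by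
  have hmul : g x * (g x)⁻¹ = 1 := mul_nonsing_inv _ ((isUnit_iff_isUnit_det _).mp (hgunit x))
  rw [covDerivM, covDerivM, pdM_conj hg hgunit hξ, conj_mul_conj hmul, conj_mul_conj hmul,
    ← sub_mul, ← mul_sub, ← add_mul, ← mul_add]
  congr 2
  noncomm_ring

end Gauge

section GaugeTransform

variable {n : ℕ} {𝔞 : Fin 3 → (Fin 3 → ℝ) → ℝ → Matrix (Fin n) (Fin n) ℂ}
  {g : (Fin 3 → ℝ) → Matrix (Fin n) (Fin n) ℂ} {s : ℝ}

noncomputable def gaugeTransform (𝔞 : Fin 3 → (Fin 3 → ℝ) → ℝ → Matrix (Fin n) (Fin n) ℂ)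
    (g : (Fin 3 → ℝ) → Matrix (Fin n) (Fin n) ℂ) (j : Fin 3) (x : Fin 3 → ℝ) (s : ℝ) :
    Matrix (Fin n) (Fin n) ℂ :=
  (g x)⁻¹ * 𝔞 j x s * g x + (g x)⁻¹ * pdM j g x

theorem gaugeTransform_eq_conj (hgunit : ∀ x, IsUnit (g x)) (j : Fin 3) (x : Fin 3 → ℝ) :
    gaugeTransform 𝔞 g j x s = (g x)⁻¹ * (𝔞 j x s + maurerCartan g j x) * g x := by
  rw [gaugeTransform, maurerCartan, mul_add, add_mul, ← mul_assoc,
    nonsing_inv_mul_cancel_right _ _ ((isUnit_iff_isUnit_det _).mp (hgunit x))]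

theorem EntrywiseSmooth.curvMt (h𝔞 : ∀ m, EntrywiseSmooth fun y => 𝔞 m y s) (j k : Fin 3) :
    EntrywiseSmooth fun y => curvMt 𝔞 j k y s :=
  (((h𝔞 k).pdM j).sub ((h𝔞 j).pdM k)).add (((h𝔞 j).mul (h𝔞 k)).sub ((h𝔞 k).mul (h𝔞 j)))

theorem curvMt_gaugeTransform (h𝔞 : ∀ m, EntrywiseSmooth fun y => 𝔞 m y s)
    (hg : EntrywiseSmooth g) (hgunit : ∀ x, IsUnit (g x)) (j k : Fin 3) (x : Fin 3 → ℝ) :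
    curvMt (gaugeTransform 𝔞 g) j k x s = (g x)⁻¹ * curvMt 𝔞 j k x s * g x := by
  have hmul : g x * (g x)⁻¹ = 1 := mul_nonsing_inv _ ((isUnit_iff_isUnit_det _).mp (hgunit x))
  have hξ : ∀ m, EntrywiseSmooth fun y => 𝔞 m y s + maurerCartan g m y :=
    fun m => (h𝔞 m).add (hg.maurerCartan hgunit m)
  simp only [curvMt, gaugeTransform_eq_conj hgunit]
  rw [pdM_conj hg hgunit (hξ k), pdM_conj hg hgunit (hξ j), pdM_add (h𝔞 k)
    (hg.maurerCartan hgunit k), pdM_add (h𝔞 j) (hg.maurerCartan hgunit j), conj_mul_conj hmul,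
    conj_mul_conj hmul, ← sub_mul, ← mul_sub, ← sub_mul, ← mul_sub, ← add_mul, ← mul_add,
    sub_eq_iff_eq_add.mp (pdM_maurerCartan_sub hg hgunit)]
  congr 2
  noncomm_ring

end GaugeTransform

section TimeDerivative

variable {n : ℕ} {f : ℝ → Matrix (Fin n) (Fin n) ℂ} {s : ℝ}

theorem dsM_add_const (E : Matrix (Fin n) (Fin n) ℂ) :
    dsM (fun τ => f τ + E) s = dsM f s := by
  ext i l
  exact deriv_add_const (E i l)

theorem dsM_conj (hf : ∀ i l, DifferentiableAt ℝ (fun τ => f τ i l) s)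
    (C D : Matrix (Fin n) (Fin n) ℂ) :
    dsM (fun τ => C * f τ * D) s = C * dsM f s * D := by
  ext i l
  have hentry : HasDerivAt (fun τ => ∑ m', ∑ m, C i m * f τ m m' * D m' l)
      (∑ m', ∑ m, C i m * deriv (fun τ => f τ m m') s * D m' l) s :=
    HasDerivAt.fun_sum fun m' _ => HasDerivAt.fun_sum fun m _ =>
      ((hf m m').hasDerivAt.const_mul _).mul_const _
  simpa [dsM, mul_apply, Finset.sum_mul] using hentry.deriv

end TimeDerivative

/-- If a smooth time-dependent gauge potential `𝔞` satisfies the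
Yang–Mills–Poisson equation and `g : ℝ³ → GL_n(ℂ)` is smooth and independent
of `s`, then the gauge transform `(𝔞^g)_j = g⁻¹ 𝔞_j g + g⁻¹ ∂_j g` also
satisfies the Yang–Mills–Poisson equation. -/
theorem gaugeTransform_preserves_YangMillsPoisson {n : ℕ}
    (𝔞 : Fin 3 → (Fin 3 → ℝ) → ℝ → Matrix (Fin n) (Fin n) ℂ)
    (h𝔞 : ∀ j i l, ContDiff ℝ (⊤ : ℕ∞) fun p : (Fin 3 → ℝ) × ℝ => 𝔞 j p.1 p.2 i l)
    (hYMP : YangMillsPoissonM 𝔞)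
    (g : (Fin 3 → ℝ) → Matrix (Fin n) (Fin n) ℂ)
    (hg : ∀ i l, ContDiff ℝ (⊤ : ℕ∞) fun x => g x i l)
    (hgunit : ∀ x, IsUnit (g x))
    (𝔞g : Fin 3 → (Fin 3 → ℝ) → ℝ → Matrix (Fin n) (Fin n) ℂ)
    (h𝔞g : ∀ j x s, 𝔞g j x s = (g x)⁻¹ * 𝔞 j x s * g x + (g x)⁻¹ * pdM j g x) :
    YangMillsPoissonM 𝔞g := by
  obtain rfl : 𝔞g = gaugeTransform 𝔞 g := funext fun j => funext fun x => funext (h𝔞g j x)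
  intro j x s hs
  have hspace : ∀ s m, EntrywiseSmooth fun y => 𝔞 m y s := fun s m i l =>
    (h𝔞 m i l).comp (contDiff_id.prodMk contDiff_const)
  have htime : ∀ i l, ContDiff ℝ (⊤ : ℕ∞) fun σ => 𝔞 j x σ i l := fun i l =>
    (h𝔞 j i l).comp (contDiff_const.prodMk contDiff_id)
  have hds : ∀ τ, dsM (fun σ => gaugeTransform 𝔞 g j x σ) τ =
      (g x)⁻¹ * dsM (fun σ => 𝔞 j x σ) τ * g x := fun τ => by
    simp only [gaugeTransform, dsM_add_const]
    exact dsM_conj (fun i l => (htime i l).differentiable (by simp) τ) _ _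
  have hdds : ∀ i l, DifferentiableAt ℝ (fun τ => dsM (fun σ => 𝔞 j x σ) τ i l) s :=
    fun i l => (contDiff_infty_iff_deriv.mp (htime i l)).2.differentiable (by simp) s
  rw [funext hds, dsM_conj hdds, hYMP j x s hs, mul_neg, neg_mul, Finset.mul_sum,
    Finset.sum_mul, neg_inj]
  refine Finset.sum_congr rfl fun k _ => ?_
  simp only [curvMt_gaugeTransform (hspace s) hg hgunit, gaugeTransform_eq_conj hgunit]
  exact (covDerivM_conj (x := x) hg hgunit (EntrywiseSmooth.curvMt (hspace s) k j)
    fun y => 𝔞 k y s).symm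
end

section
/- Let 𝔨 be a finite-dimensional real Lie algebra with an invariant inner product, and let 𝔞 be a smooth solution of the Yang–Mills–Poisson equation such that for some R > 0, 𝔞(x,s) = 0 whenever |x| ≥ R (for every s ≥ 0). Then the function s ↦ ‖∂_s 𝔞(·,s)‖²_{L²} − ‖𝔟(·,s)‖²_{L²} is constant on [0,∞). -/
/-!
Let `e = ∑ⱼ |∂ₛ𝔞ⱼ|² - ½ ∑ⱼₖ |𝔟ⱼₖ|²` be the energy density. Since `∂ₛ𝔟ⱼₖ = ∂ⱼ^𝔞 ∂ₛ𝔞ₖ - ∂ₖ^𝔞 ∂ₛ𝔞ⱼ`,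
the antisymmetry of `𝔟` and the Yang–Mills–Poisson equation give
`∂ₛe = -2 ∑ⱼₖ (⟨∂ₛ𝔞ⱼ, ∂ₖ^𝔞 𝔟ₖⱼ⟩ + ⟨𝔟ₖⱼ, ∂ₖ^𝔞 ∂ₛ𝔞ⱼ⟩)`, and invariance of the inner product
makes `∂ₖ^𝔞` a derivation for `⟨·,·⟩`, so `∂ₛe = -2 ∑ⱼₖ ∂ₖ⟨𝔟ₖⱼ, ∂ₛ𝔞ⱼ⟩` is a divergence with
compact support and integrates to zero. For `s ≥ 0` everything vanishes off the ball `|x| ≤ R`,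
so the energy is `∫_{|x| ≤ R} e(·, s)`, which may be differentiated under the integral sign.
-/

open MeasureTheory

/-- Partial derivative `∂_j f` of a function on `ℝ³` with values in a normed
real vector space. -/
noncomputable def pd3 {𝕜 : Type*} [NormedAddCommGroup 𝕜] [NormedSpace ℝ 𝕜]
    (j : Fin 3) (f : (Fin 3 → ℝ) → 𝕜) (x : Fin 3 → ℝ) : 𝕜 :=
  fderiv ℝ f x (Pi.single j 1)

/-- Spatial curvature `𝔟_{jk}(x,s) = ∂_j 𝔞_k − ∂_k 𝔞_j + [𝔞_j, 𝔞_k]` of a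
time-dependent `𝔨`-valued gauge potential, with bracket `β`. -/
noncomputable def curvK {𝔨 : Type*} [NormedAddCommGroup 𝔨] [NormedSpace ℝ 𝔨]
    (β : 𝔨 →ₗ[ℝ] 𝔨 →ₗ[ℝ] 𝔨) (𝔞 : Fin 3 → (Fin 3 → ℝ) → ℝ → 𝔨) (j k : Fin 3)
    (x : Fin 3 → ℝ) (s : ℝ) : 𝔨 :=
  pd3 j (fun y => 𝔞 k y s) x - pd3 k (fun y => 𝔞 j y s) x
    + β (𝔞 j x s) (𝔞 k x s)

/-- The Yang–Mills–Poisson equation in temporal gauge: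
`∂_s² 𝔞_j = −∑_k ∂_k^𝔞 𝔟_{kj}` where `∂_k^𝔞 ξ = ∂_k ξ + [𝔞_k, ξ]`. -/
def YangMillsPoissonK {𝔨 : Type*} [NormedAddCommGroup 𝔨] [NormedSpace ℝ 𝔨]
    (β : 𝔨 →ₗ[ℝ] 𝔨 →ₗ[ℝ] 𝔨) (𝔞 : Fin 3 → (Fin 3 → ℝ) → ℝ → 𝔨) : Prop :=
  ∀ j x (s : ℝ), 0 ≤ s →
    deriv (fun τ => deriv (fun σ => 𝔞 j x σ) τ) s =
      -∑ k, (pd3 k (fun y => curvK β 𝔞 k j y s) x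
        + β (𝔞 k x s) (curvK β 𝔞 k j x s))

open Set Filter Function
open scoped ContDiff

section Fields

variable {E F : Type*} [NormedAddCommGroup E] [NormedSpace ℝ E]
  [NormedAddCommGroup F] [NormedSpace ℝ F]

noncomputable def timeDeriv (f : E → ℝ → F) (x : E) (s : ℝ) : F := deriv (f x) s

theorem fderiv_fderiv_apply_comm {g : E → F} (hg : ContDiff ℝ 2 g) (q v w : E) :
    fderiv ℝ (fun p => fderiv ℝ g p v) q w = fderiv ℝ (fun p => fderiv ℝ g p w) q v := by
  have hg' : HasFDerivAt (fderiv ℝ g) (fderiv ℝ (fderiv ℝ g) q) q :=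
    ((hg.fderiv_right one_add_one_eq_two.le).differentiable one_ne_zero q).hasFDerivAt
  have happly (u : E) : HasFDerivAt (fun p => fderiv ℝ g p u)
      ((ContinuousLinearMap.apply ℝ F u).comp (fderiv ℝ (fderiv ℝ g) q)) q :=
    (ContinuousLinearMap.apply ℝ F u).hasFDerivAt.comp q hg'
  rw [(happly v).fderiv, (happly w).fderiv]
  exact ((hg.contDiffAt).isSymmSndFDerivAt (by simp)).eq w v

theorem contDiff_fderiv_apply {g : E → F} (hg : ContDiff ℝ ∞ g) (v : E) :
    ContDiff ℝ ∞ fun p => fderiv ℝ g p v :=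
  (hg.fderiv_right (m := ∞) le_rfl).clm_apply contDiff_const

variable {f : E → ℝ → F}

theorem hasDerivAt_timeDeriv (hf : Differentiable ℝ (uncurry f)) (x : E) (s : ℝ) :
    HasDerivAt (f x) (timeDeriv f x s) s :=
  ((hf (x, s)).hasFDerivAt.comp_hasDerivAt s
    ((hasDerivAt_const s x).prodMk (hasDerivAt_id s))).differentiableAt.hasDerivAt

theorem timeDeriv_eq_fderiv (hf : Differentiable ℝ (uncurry f)) (x : E) (s : ℝ) :
    timeDeriv f x s = fderiv ℝ (uncurry f) (x, s) (0, 1) :=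
  ((hf (x, s)).hasFDerivAt.comp_hasDerivAt s
    ((hasDerivAt_const s x).prodMk (hasDerivAt_id s))).deriv

theorem fderiv_slice_apply (hf : Differentiable ℝ (uncurry f)) (x : E) (s : ℝ) (v : E) :
    fderiv ℝ (f · s) x v = fderiv ℝ (uncurry f) (x, s) (v, 0) := by
  have h : HasFDerivAt (f · s)
      ((fderiv ℝ (uncurry f) (x, s)).comp ((ContinuousLinearMap.id ℝ E).prod 0)) x :=
    HasFDerivAt.comp (g := uncurry f) (f := fun y : E => (y, s)) x (hf (x, s)).hasFDerivAt
      ((hasFDerivAt_id x).prodMk (hasFDerivAt_const s x))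
  rw [h.fderiv]
  rfl

theorem contDiff_slice {n : WithTop ℕ∞} (hf : ContDiff ℝ n (uncurry f)) (s : ℝ) :
    ContDiff ℝ n (f · s) :=
  hf.comp (contDiff_id.prodMk contDiff_const)

theorem uncurry_timeDeriv (hf : Differentiable ℝ (uncurry f)) :
    uncurry (timeDeriv f) = fun p => fderiv ℝ (uncurry f) p (0, 1) :=
  funext fun p => timeDeriv_eq_fderiv hf p.1 p.2

theorem uncurry_fderiv_slice_apply (hf : Differentiable ℝ (uncurry f)) (v : E) :
    (uncurry fun x s => fderiv ℝ (f · s) x v) = fun p => fderiv ℝ (uncurry f) p (v, 0) :=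
  funext fun p => fderiv_slice_apply hf p.1 p.2 v

theorem continuous_timeDeriv (hf : ContDiff ℝ 1 (uncurry f)) :
    Continuous (uncurry (timeDeriv f)) := by
  rw [uncurry_timeDeriv (hf.differentiable one_ne_zero)]
  exact (hf.continuous_fderiv one_ne_zero).clm_apply continuous_const

variable (hf : ContDiff ℝ ∞ (uncurry f))
include hf

theorem contDiff_timeDeriv : ContDiff ℝ ∞ (uncurry (timeDeriv f)) := by
  rw [uncurry_timeDeriv (hf.differentiable (by simp))]
  exact contDiff_fderiv_apply hf _

theorem contDiff_fderiv_slice_apply (v : E) :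
    ContDiff ℝ ∞ (uncurry fun x s => fderiv ℝ (f · s) x v) := by
  rw [uncurry_fderiv_slice_apply (hf.differentiable (by simp))]
  exact contDiff_fderiv_apply hf _

theorem timeDeriv_fderiv_slice_apply (v x : E) (s : ℝ) :
    timeDeriv (fun x s => fderiv ℝ (f · s) x v) x s = fderiv ℝ (timeDeriv f · s) x v := by
  have hdiff := hf.differentiable (by simp)
  rw [timeDeriv_eq_fderiv ((contDiff_fderiv_slice_apply hf v).differentiable (by simp)),
    fderiv_slice_apply ((contDiff_timeDeriv hf).differentiable (by simp)),
    uncurry_fderiv_slice_apply hdiff, uncurry_timeDeriv hdiff]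
  exact fderiv_fderiv_apply_comm (hf.of_le ENat.LEInfty.out) _ _ _

end Fields

section Vanishing

variable {E F : Type*} [NormedAddCommGroup E] [NormedSpace ℝ E]
  [NormedAddCommGroup F] [NormedSpace ℝ F]

theorem deriv_eq_zero_of_forall_le_eq_zero {g : ℝ → F} {s : ℝ}
    (hg : ∀ σ, s ≤ σ → g σ = 0) : deriv g s = 0 := by
  by_cases hd : DifferentiableAt ℝ g s
  · have h0 : HasDerivWithinAt g 0 (Ici s) s :=
      (hasDerivWithinAt_const s (Ici s) (0 : F)).congr (fun σ hσ => hg σ hσ) (hg s le_rfl)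
    exact (uniqueDiffWithinAt_Ici s).eq_deriv _ hd.hasDerivAt.hasDerivWithinAt h0
  · exact deriv_zero_of_not_differentiableAt hd

theorem fderiv_eq_zero_of_eqOn_zero {g : E → F} {U : Set E} (hU : IsOpen U) (hg : EqOn g 0 U)
    {x : E} (hx : x ∈ U) : fderiv ℝ g x = 0 := by
  rw [(eventuallyEq_of_mem (hU.mem_nhds hx) hg).fderiv_eq, fderiv_zero]
  rfl

theorem is_const_on_Ici_of_hasDerivAt_zero {G : ℝ → F} {a x y : ℝ}
    (hG : ∀ t, a ≤ t → HasDerivAt G 0 t) (hx : a ≤ x) (hy : a ≤ y) : G x = G y :=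
  (convex_Ici a).is_const_of_fderivWithin_eq_zero
    (fun t ht => (hG t ht).differentiableAt.differentiableWithinAt)
    (fun t ht => by
      rw [(hG t ht).hasFDerivAt.hasFDerivWithinAt.fderivWithin (uniqueDiffOn_Ici a t ht)]
      simp)
    hx hy

def VanishesOff {X Y : Type*} [Zero Y] (K : Set X) (f : X → ℝ → Y) : Prop :=
  ∀ x ∉ K, ∀ s, 0 ≤ s → f x s = 0

variable {K : Set E} {f : E → ℝ → F}

omit [NormedAddCommGroup E] [NormedSpace ℝ E] in
theorem VanishesOff.timeDeriv (hf : VanishesOff K f) : VanishesOff K (timeDeriv f) :=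
  fun x hx _ hs => deriv_eq_zero_of_forall_le_eq_zero fun σ hσ => hf x hx σ (hs.trans hσ)

theorem VanishesOff.fderiv_slice_apply (hK : IsClosed K) (hf : VanishesOff K f) (v : E) :
    VanishesOff K fun x s => fderiv ℝ (f · s) x v := fun x hx s hs => by
  change fderiv ℝ (f · s) x v = 0
  rw [fderiv_eq_zero_of_eqOn_zero hK.isOpen_compl (fun y hy => hf y hy s hs) hx]
  rfl

end Vanishing

section Integrals

variable {E F : Type*} [NormedAddCommGroup E] [NormedSpace ℝ E] [FiniteDimensional ℝ E]
  [MeasurableSpace E] [BorelSpace E] [NormedAddCommGroup F] [NormedSpace ℝ F] {μ : Measure E}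

theorem integral_fderiv_apply_eq_zero [μ.IsAddHaarMeasure] {g : E → F} (hg : ContDiff ℝ 1 g)
    (hcs : HasCompactSupport g) (v : E) : ∫ x, fderiv ℝ g x v ∂μ = 0 := by
  have hint (h : E → F) (hh : Continuous h) (hcs : HasCompactSupport h) :
      Integrable (fun x => (1 : ℝ) • h x) μ := by
    simpa using hh.integrable_of_hasCompactSupport hcs
  have := integral_smul_fderiv_eq_neg_fderiv_smul_of_integrable (μ := μ) (f := fun _ => (1 : ℝ))
    (g := g) (v := v) (by simp) (hint _ ((hg.continuous_fderiv one_ne_zero).clm_apply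
      continuous_const) (hcs.fderiv_apply (𝕜 := ℝ) v)) (hint g hg.continuous hcs)
    (fun _ _ => differentiableAt_const _) (fun x _ => hg.differentiable one_ne_zero x)
  simpa using this

theorem hasDerivAt_setIntegral_of_contDiff [IsFiniteMeasureOnCompacts μ] {f : E → ℝ → F}
    (hf : ContDiff ℝ 1 (uncurry f)) {K : Set E} (hK : IsCompact K) (t : ℝ) :
    HasDerivAt (fun τ => ∫ x in K, f x τ ∂μ) (∫ x in K, timeDeriv f x t ∂μ) t := by
  obtain ⟨C, hC⟩ := (hK.prod (isCompact_closedBall t 1)).exists_bound_of_continuousOn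
    (continuous_timeDeriv hf).continuousOn
  have hslice (τ : ℝ) : Continuous (f · τ) := (contDiff_slice hf τ).continuous
  refine (hasDerivAt_integral_of_dominated_loc_of_deriv_le (μ := μ.restrict K)
    (bound := fun _ => C)
    (Metric.closedBall_mem_nhds t one_pos) (.of_forall fun τ => (hslice τ).aestronglyMeasurable)
    ((hslice t).continuousOn.integrableOn_compact hK)
    ((continuous_timeDeriv hf).comp (continuous_id.prodMk continuous_const)).aestronglyMeasurable
    ?_ (integrableOn_const hK.measure_lt_top.ne) (.of_forall fun x τ _ =>
      hasDerivAt_timeDeriv (hf.differentiable one_ne_zero) x τ)).2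
  filter_upwards [ae_restrict_mem₀ hK.measurableSet.nullMeasurableSet] with x hx τ hτ
  exact hC (x, τ) ⟨hx, hτ⟩

end Integrals

theorem norm_le_sqrt_sum_sq {ι : Type*} [Fintype ι] (x : ι → ℝ) : ‖x‖ ≤ √(∑ i, x i ^ 2) :=
  (pi_norm_le_iff_of_nonneg (Real.sqrt_nonneg _)).2 fun i =>
    Real.abs_le_sqrt (Finset.single_le_sum (fun i _ => sq_nonneg (x i)) (Finset.mem_univ i))

local notation "ℝ³" => Fin 3 → ℝ

section YangMills

variable {𝔨 : Type*} [NormedAddCommGroup 𝔨] [NormedSpace ℝ 𝔨]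
  (β : 𝔨 →ₗ[ℝ] 𝔨 →ₗ[ℝ] 𝔨) (𝔞 : Fin 3 → ℝ³ → ℝ → 𝔨)

noncomputable def covDeriv (k : Fin 3) (ξ : ℝ³ → ℝ → 𝔨) (x : ℝ³) (s : ℝ) : 𝔨 :=
  pd3 k (ξ · s) x + β (𝔞 k x s) (ξ x s)

theorem yangMillsPoissonK_iff : YangMillsPoissonK β 𝔞 ↔ ∀ j x (s : ℝ), 0 ≤ s →
    timeDeriv (timeDeriv (𝔞 j)) x s = -∑ k, covDeriv β 𝔞 k (curvK β 𝔞 k j) x s :=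
  Iff.rfl

variable {β 𝔞}

theorem curvK_swap (halt : β.IsAlt) (j k : Fin 3) (x : ℝ³) (s : ℝ) :
    curvK β 𝔞 k j x s = -curvK β 𝔞 j k x s := by
  rw [curvK, curvK, ← halt.neg]
  abel

theorem VanishesOff.curvK {K : Set ℝ³} (hK : IsClosed K) (h𝔞 : ∀ j, VanishesOff K (𝔞 j))
    (j k : Fin 3) : VanishesOff K (curvK β 𝔞 j k) := fun x hx s hs => by
  have hpd (j k : Fin 3) : pd3 j (𝔞 k · s) x = 0 := (h𝔞 k).fderiv_slice_apply hK _ x hx s hs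
  simp [_root_.curvK, hpd, h𝔞 j x hx s hs]

variable [FiniteDimensional ℝ 𝔨]

theorem ContDiff.bracket {X : Type*} [NormedAddCommGroup X] [NormedSpace ℝ X] {n : WithTop ℕ∞}
    {u v : X → 𝔨} (hu : ContDiff ℝ n u) (hv : ContDiff ℝ n v) :
    ContDiff ℝ n fun p => β (u p) (v p) :=
  (β.toContinuousBilinearMap.contDiff.comp hu).clm_apply hv

theorem HasDerivAt.bracket {u v : ℝ → 𝔨} {u' v' : 𝔨} {t : ℝ} (hu : HasDerivAt u u' t)
    (hv : HasDerivAt v v' t) :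
    HasDerivAt (fun τ => β (u τ) (v τ)) (β u' (v t) + β (u t) v') t :=
  (β.toContinuousBilinearMap.hasFDerivAt.comp_hasDerivAt t hu).clm_apply hv

variable (h𝔞 : ∀ j, ContDiff ℝ ∞ (uncurry (𝔞 j)))
include h𝔞

variable (β) in
theorem contDiff_curvK (j k : Fin 3) : ContDiff ℝ ∞ (uncurry (curvK β 𝔞 j k)) :=
  ((contDiff_fderiv_slice_apply (h𝔞 k) _).sub (contDiff_fderiv_slice_apply (h𝔞 j) _)).add
    ((h𝔞 j).bracket (h𝔞 k))

theorem timeDeriv_curvK (halt : β.IsAlt) (j k : Fin 3) (x : ℝ³) (s : ℝ) :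
    timeDeriv (curvK β 𝔞 j k) x s
      = covDeriv β 𝔞 j (timeDeriv (𝔞 k)) x s - covDeriv β 𝔞 k (timeDeriv (𝔞 j)) x s := by
  have hpd (j k : Fin 3) : HasDerivAt (fun σ => pd3 j (𝔞 k · σ) x)
      (pd3 j (timeDeriv (𝔞 k) · s) x) s := by
    rw [pd3, ← timeDeriv_fderiv_slice_apply (h𝔞 k)]
    exact hasDerivAt_timeDeriv
      ((contDiff_fderiv_slice_apply (h𝔞 k) _).differentiable (by simp)) x s
  have ha (j : Fin 3) := hasDerivAt_timeDeriv ((h𝔞 j).differentiable (by simp)) x s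
  have hb : HasDerivAt (curvK β 𝔞 j k x) _ s :=
    ((hpd j k).sub (hpd k j)).add ((ha j).bracket (β := β) (ha k))
  rw [timeDeriv, hb.deriv, covDeriv, covDeriv, ← halt.neg]
  abel

end YangMills

section Energy

open scoped RealInnerProductSpace

theorem sum_sum_inner_sub_swap {ι E : Type*} [Fintype ι] [NormedAddCommGroup E]
    [InnerProductSpace ℝ E] {b c : ι → ι → E} (hb : ∀ j k, b k j = -b j k) :
    ∑ j, ∑ k, ⟪b j k, c j k - c k j⟫ = 2 * ∑ j, ∑ k, ⟪b k j, c k j⟫ := by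
  have hswap : ∑ j, ∑ k, ⟪b j k, c k j⟫ = -∑ j, ∑ k, ⟪b k j, c k j⟫ := by
    simp only [← Finset.sum_neg_distrib, ← inner_neg_left, ← hb]
  have hcomm : ∑ j, ∑ k, ⟪b j k, c j k⟫ = ∑ j, ∑ k, ⟪b k j, c k j⟫ := Finset.sum_comm
  simp only [inner_sub_right, Finset.sum_sub_distrib, hswap, hcomm]
  ring

variable {𝔨 : Type*} [NormedAddCommGroup 𝔨] [InnerProductSpace ℝ 𝔨]
  (β : 𝔨 →ₗ[ℝ] 𝔨 →ₗ[ℝ] 𝔨) (𝔞 : Fin 3 → ℝ³ → ℝ → 𝔨)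

noncomputable def energyDensity (x : ℝ³) (s : ℝ) : ℝ :=
  ∑ j, ‖timeDeriv (𝔞 j) x s‖ ^ 2 - (1 / 2) * ∑ j, ∑ k, ‖curvK β 𝔞 j k x s‖ ^ 2

variable {β 𝔞}

theorem inner_covDeriv_add_inner_covDeriv (hinv : ∀ x y z : 𝔨, ⟪β z x, y⟫ + ⟪x, β z y⟫ = 0)
    {ξ η : ℝ³ → ℝ → 𝔨} {k : Fin 3} {x : ℝ³} {s : ℝ} (hξ : DifferentiableAt ℝ (ξ · s) x)
    (hη : DifferentiableAt ℝ (η · s) x) :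
    ⟪covDeriv β 𝔞 k ξ x s, η x s⟫ + ⟪ξ x s, covDeriv β 𝔞 k η x s⟫
      = pd3 k (fun y => ⟪ξ y s, η y s⟫) x := by
  simp only [covDeriv, pd3, inner_add_left, inner_add_right]
  rw [fderiv_inner_apply ℝ hξ hη]
  linarith [hinv (ξ x s) (η x s) (𝔞 k x s)]

theorem VanishesOff.energyDensity {K : Set ℝ³} (hK : IsClosed K)
    (hvan : ∀ j, VanishesOff K (𝔞 j)) : VanishesOff K (energyDensity β 𝔞) :=
  fun x hx s hs => by
    simp [_root_.energyDensity, (hvan _).timeDeriv x hx s hs,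
      VanishesOff.curvK hK hvan _ _ x hx s hs]

variable [FiniteDimensional ℝ 𝔨] (h𝔞 : ∀ j, ContDiff ℝ ∞ (uncurry (𝔞 j)))
include h𝔞

variable (β) in
theorem contDiff_energyDensity : ContDiff ℝ ∞ (uncurry (energyDensity β 𝔞)) :=
  (ContDiff.sum fun j _ => (contDiff_timeDeriv (h𝔞 j)).norm_sq ℝ).sub
    (contDiff_const.mul (ContDiff.sum fun j _ => ContDiff.sum fun k _ =>
      (contDiff_curvK β h𝔞 j k).norm_sq ℝ))

theorem timeDeriv_energyDensity (halt : β.IsAlt)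
    (hinv : ∀ x y z : 𝔨, ⟪β z x, y⟫ + ⟪x, β z y⟫ = 0) (hYMP : YangMillsPoissonK β 𝔞)
    {s : ℝ} (hs : 0 ≤ s) (x : ℝ³) :
    timeDeriv (energyDensity β 𝔞) x s
      = -2 * ∑ j, ∑ k, pd3 k (fun y => ⟪curvK β 𝔞 k j y s, timeDeriv (𝔞 j) y s⟫) x := by
  have hA (j : Fin 3) := hasDerivAt_timeDeriv
    ((contDiff_timeDeriv (h𝔞 j)).differentiable (by simp)) x s
  have hb (j k : Fin 3) := hasDerivAt_timeDeriv
    ((contDiff_curvK β h𝔞 j k).differentiable (by simp)) x s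
  have he : HasDerivAt (energyDensity β 𝔞 x) _ s :=
    (HasDerivAt.fun_sum fun j _ => (hA j).norm_sq).sub
      ((HasDerivAt.fun_sum fun j _ => HasDerivAt.fun_sum fun k _ => (hb j k).norm_sq).const_mul _)
  have hflux (j k : Fin 3) :
      ⟪timeDeriv (𝔞 j) x s, covDeriv β 𝔞 k (curvK β 𝔞 k j) x s⟫
        + ⟪curvK β 𝔞 k j x s, covDeriv β 𝔞 k (timeDeriv (𝔞 j)) x s⟫
      = pd3 k (fun y => ⟪curvK β 𝔞 k j y s, timeDeriv (𝔞 j) y s⟫) x := by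
    rw [real_inner_comm]
    exact inner_covDeriv_add_inner_covDeriv hinv
      ((contDiff_slice (contDiff_curvK β h𝔞 k j) s).differentiable (by simp) x)
      ((contDiff_slice (contDiff_timeDeriv (h𝔞 j)) s).differentiable (by simp) x)
  rw [timeDeriv, he.deriv]
  simp only [timeDeriv_curvK h𝔞 halt, (yangMillsPoissonK_iff β 𝔞).1 hYMP _ x s hs,
    ← Finset.mul_sum]
  rw [sum_sum_inner_sub_swap (c := fun j k => covDeriv β 𝔞 j (timeDeriv (𝔞 k)) x s)
    (curvK_swap halt · · x s)]
  simp only [← hflux, inner_neg_right, inner_sum, Finset.sum_add_distrib, Finset.sum_neg_distrib]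
  ring

variable {K : Set ℝ³} (hK : IsCompact K) (hvan : ∀ j, VanishesOff K (𝔞 j))
include hK hvan

theorem integral_timeDeriv_energyDensity_eq_zero (halt : β.IsAlt)
    (hinv : ∀ x y z : 𝔨, ⟪β z x, y⟫ + ⟪x, β z y⟫ = 0) (hYMP : YangMillsPoissonK β 𝔞)
    {s : ℝ} (hs : 0 ≤ s) : ∫ x, timeDeriv (energyDensity β 𝔞) x s = 0 := by
  have hflux_smooth (j k : Fin 3) :
      ContDiff ℝ ∞ (fun y => ⟪curvK β 𝔞 k j y s, timeDeriv (𝔞 j) y s⟫) :=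
    (contDiff_slice (contDiff_curvK β h𝔞 k j) s).inner ℝ
      (contDiff_slice (contDiff_timeDeriv (h𝔞 j)) s)
  have hflux_supp (j k : Fin 3) :
      HasCompactSupport (fun y => ⟪curvK β 𝔞 k j y s, timeDeriv (𝔞 j) y s⟫) :=
    HasCompactSupport.intro hK fun y hy => by
      rw [VanishesOff.curvK hK.isClosed hvan k j y hy s hs, inner_zero_left]
  have hint (j k : Fin 3) :
      Integrable (fun x => pd3 k (fun y => ⟪curvK β 𝔞 k j y s, timeDeriv (𝔞 j) y s⟫) x) :=
    (((hflux_smooth j k).continuous_fderiv (by simp)).clm_apply continuous_const)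
      |>.integrable_of_hasCompactSupport ((hflux_supp j k).fderiv_apply (𝕜 := ℝ) _)
  simp_rw [timeDeriv_energyDensity h𝔞 halt hinv hYMP hs]
  rw [integral_const_mul,
    integral_finsetSum _ fun j _ => integrable_finsetSum _ fun k _ => hint j k]
  refine mul_eq_zero_of_right _ (Finset.sum_eq_zero fun j _ => ?_)
  rw [integral_finsetSum _ fun k _ => hint j k]
  exact Finset.sum_eq_zero fun k _ =>
    integral_fderiv_apply_eq_zero ((hflux_smooth j k).of_le (by simp)) (hflux_supp j k) _

theorem energy_eq_setIntegral_energyDensity {s : ℝ} (hs : 0 ≤ s) :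
    (∑ j, ∫ x, ‖timeDeriv (𝔞 j) x s‖ ^ 2) - (1 / 2) * ∑ j, ∑ k, ∫ x, ‖curvK β 𝔞 j k x s‖ ^ 2
      = ∫ x in K, energyDensity β 𝔞 x s := by
  have hint {f : ℝ³ → ℝ → 𝔨} (hf : ContDiff ℝ ∞ (uncurry f)) (hfK : VanishesOff K f) :
      Integrable fun x => ‖f x s‖ ^ 2 :=
    ((contDiff_slice hf s).continuous.norm.pow 2).integrable_of_hasCompactSupport
      (HasCompactSupport.intro hK fun x hx => by simp [hfK x hx s hs])
  have hA (j : Fin 3) := hint (contDiff_timeDeriv (h𝔞 j)) (hvan j).timeDeriv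
  have hb (j k : Fin 3) :=
    hint (contDiff_curvK β h𝔞 j k) (VanishesOff.curvK hK.isClosed hvan j k)
  rw [setIntegral_eq_integral_of_forall_compl_eq_zero
    fun x hx => VanishesOff.energyDensity hK.isClosed hvan x hx s hs]
  simp only [energyDensity]
  rw [integral_sub (integrable_finsetSum _ fun j _ => hA j)
    ((integrable_finsetSum _ fun j _ => integrable_finsetSum _ fun k _ => hb j k).const_mul _),
    integral_const_mul, integral_finsetSum _ fun j _ => hA j,
    integral_finsetSum _ fun j _ => integrable_finsetSum _ fun k _ => hb j k]
  simp only [integral_finsetSum _ fun k _ => hb _ k]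

end Energy

theorem energy_difference_constant_general
    (𝔨 : Type*) [NormedAddCommGroup 𝔨] [InnerProductSpace ℝ 𝔨]
    [FiniteDimensional ℝ 𝔨]
    (β : 𝔨 →ₗ[ℝ] 𝔨 →ₗ[ℝ] 𝔨)
    (halt : ∀ x : 𝔨, β x x = 0)
    (hinv : ∀ x y z : 𝔨, (inner ℝ (β z x) y : ℝ) + (inner ℝ x (β z y) : ℝ) = 0)
    (𝔞 : Fin 3 → (Fin 3 → ℝ) → ℝ → 𝔨)
    (h𝔞 : ∀ j, ContDiff ℝ (⊤ : ℕ∞) fun p : (Fin 3 → ℝ) × ℝ => 𝔞 j p.1 p.2)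
    (hYMP : YangMillsPoissonK β 𝔞)
    (R : ℝ)
    (hsupp : ∀ j (x : Fin 3 → ℝ) (s : ℝ), 0 ≤ s →
      R ≤ Real.sqrt (∑ i, x i ^ 2) → 𝔞 j x s = 0) :
    ∀ s₁ s₂ : ℝ, 0 ≤ s₁ → 0 ≤ s₂ →
      ((∑ j, ∫ x : Fin 3 → ℝ, ‖deriv (fun σ => 𝔞 j x σ) s₁‖ ^ 2)
        - (1 / 2) * ∑ j, ∑ k, ∫ x : Fin 3 → ℝ, ‖curvK β 𝔞 j k x s₁‖ ^ 2)
      = ((∑ j, ∫ x : Fin 3 → ℝ, ‖deriv (fun σ => 𝔞 j x σ) s₂‖ ^ 2)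
        - (1 / 2) * ∑ j, ∑ k, ∫ x : Fin 3 → ℝ, ‖curvK β 𝔞 j k x s₂‖ ^ 2) := by
  intro s₁ s₂ h₁ h₂
  set K := Metric.closedBall (0 : Fin 3 → ℝ) R
  have hK : IsCompact K := isCompact_closedBall 0 R
  have hvan (j : Fin 3) : VanishesOff K (𝔞 j) := fun x hx s hs =>
    hsupp j x s hs <| (not_le.1 (by simpa [K] using hx)).le.trans (norm_le_sqrt_sum_sq x)
  -- Nothing is known about `𝔞` for negative times, so the energy is integrated over the fixed
  -- compact `K`: then it can be differentiated (two-sidedly) at every `t ≥ 0`, including `t = 0`.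
  have hconst (t : ℝ) (ht : 0 ≤ t) :
      HasDerivAt (fun τ => ∫ x in K, energyDensity β 𝔞 x τ) 0 t := by
    have h := hasDerivAt_setIntegral_of_contDiff (μ := volume)
      ((contDiff_energyDensity β h𝔞).of_le (by simp)) hK t
    rwa [setIntegral_eq_integral_of_forall_compl_eq_zero fun x hx =>
        (VanishesOff.energyDensity hK.isClosed hvan).timeDeriv x hx t ht,
      integral_timeDeriv_energyDensity_eq_zero h𝔞 hK hvan halt hinv hYMP ht] at h
  exact (energy_eq_setIntegral_energyDensity h𝔞 hK hvan h₁).trans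
    ((is_const_on_Ici_of_hasDerivAt_zero hconst h₁ h₂).trans
      (energy_eq_setIntegral_energyDensity h𝔞 hK hvan h₂).symm)

/-- Let `𝔨` be a finite-dimensional real Lie algebra with an
invariant inner product (a finite-dimensional real inner product space with an
alternating bilinear bracket `β` satisfying Jacobi, with
`⟨[z,x],y⟩ + ⟨x,[z,y]⟩ = 0`), and let `𝔞` be a smooth solution of the
Yang–Mills–Poisson equation with `𝔞(x,s) = 0` for `|x| ≥ R` (all `s ≥ 0`).
Then `s ↦ ‖∂_s 𝔞(·,s)‖²_{L²} − ‖𝔟(·,s)‖²_{L²}` is constant on `[0,∞)`. -/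
theorem energy_difference_constant
    (𝔨 : Type*) [NormedAddCommGroup 𝔨] [InnerProductSpace ℝ 𝔨]
    [FiniteDimensional ℝ 𝔨]
    (β : 𝔨 →ₗ[ℝ] 𝔨 →ₗ[ℝ] 𝔨)
    (halt : ∀ x : 𝔨, β x x = 0)
    (hjac : ∀ x y z : 𝔨, β x (β y z) + β y (β z x) + β z (β x y) = 0)
    (hinv : ∀ x y z : 𝔨, (inner ℝ (β z x) y : ℝ) + (inner ℝ x (β z y) : ℝ) = 0)
    (𝔞 : Fin 3 → (Fin 3 → ℝ) → ℝ → 𝔨)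
    (h𝔞 : ∀ j, ContDiff ℝ (⊤ : ℕ∞) fun p : (Fin 3 → ℝ) × ℝ => 𝔞 j p.1 p.2)
    (hYMP : YangMillsPoissonK β 𝔞)
    (R : ℝ) (hR : 0 < R)
    (hsupp : ∀ j (x : Fin 3 → ℝ) (s : ℝ), 0 ≤ s →
      R ≤ Real.sqrt (∑ i, x i ^ 2) → 𝔞 j x s = 0) :
    ∀ s₁ s₂ : ℝ, 0 ≤ s₁ → 0 ≤ s₂ →
      ((∑ j, ∫ x : Fin 3 → ℝ, ‖deriv (fun σ => 𝔞 j x σ) s₁‖ ^ 2)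
        - (1 / 2) * ∑ j, ∑ k, ∫ x : Fin 3 → ℝ, ‖curvK β 𝔞 j k x s₁‖ ^ 2)
      = ((∑ j, ∫ x : Fin 3 → ℝ, ‖deriv (fun σ => 𝔞 j x σ) s₂‖ ^ 2)
        - (1 / 2) * ∑ j, ∑ k, ∫ x : Fin 3 → ℝ, ‖curvK β 𝔞 j k x s₂‖ ^ 2) :=
  energy_difference_constant_general 𝔨 β halt hinv 𝔞 h𝔞 hYMP R hsupp
end
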